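/- arXiv:0705.3364 — 2 statements merged into one kernel-verified Lean document; each statement's English description precedes it below -/
import Mathlib

section
/- Let h : ℍ×(0,∞) → ℝ be C^∞, satisfying the homogeneity property r⁴h(δ_r ω, r²t) = h(ω,t) and the semigroup property h(·,s)⋆h(·,t)=h(·,s+t), with h(·,t) Schwartz for each t>0, t ↦ h(·,t) smooth with Schwartz t-derivatives, and differentiation under the convolution integral valid. Set φ(ω) := −∂_t h(ω,t)|_{t=1}. Then for every a>0, φ_{√a} ⋆ φ_{√a} = a² (∂_t² h)(·, 2a). In particular, when h satisfies the heat equation (∂_t+L)h=0 so that φ = Lh(·,1), this reads φ_{√a} ⋆ φ_{√a} = a² L²h(·,2a). -/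
open MeasureTheory Filter Topology

noncomputable section

/-- The underlying space of the Heisenberg group: ℝ³. -/
abbrev H3 : Type := ℝ × ℝ × ℝ

/-- Heisenberg group multiplication. -/
def Hmul (x y : H3) : H3 :=
  (x.1 + y.1, x.2.1 + y.2.1, x.2.2 + y.2.2 + (x.1 * y.2.1 - x.2.1 * y.1) / 2)

/-- Heisenberg group inverse. -/
def Hinv (x : H3) : H3 := (-x.1, -x.2.1, -x.2.2)

/-- Dilation δ_a(p,q,t) = (ap, aq, a²t). -/
def Hdil (a : ℝ) (x : H3) : H3 := (a * x.1, a * x.2.1, a ^ 2 * x.2.2)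

/-- Convolution on the Heisenberg group (complex valued):
(f⋆g)(x) = ∫ f(y) g(y⁻¹x) dy. -/
def Hconv (f g : H3 → ℂ) (x : H3) : ℂ := ∫ y : H3, f y * g (Hmul (Hinv y) x)

/-- Convolution on the Heisenberg group (real valued). -/
def HconvR (f g : H3 → ℝ) (x : H3) : ℝ := ∫ y : H3, f y * g (Hmul (Hinv y) x)

/-- f̃(x) = conj (f (x⁻¹)). -/
def Htilde (f : H3 → ℂ) (x : H3) : ℂ := starRingEnd ℂ (f (Hinv x))

/-- The dilate f_a(ω) = a⁻⁴ f(a⁻¹ω). -/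
def Hdilate (f : H3 → ℂ) (a : ℝ) (x : H3) : ℂ := ((a ^ 4 : ℝ) : ℂ)⁻¹ * f (Hdil a⁻¹ x)

/-- The dilate f_a(ω) = a⁻⁴ f(a⁻¹ω), real-valued case. -/
def HdilateR (f : H3 → ℝ) (a : ℝ) (x : H3) : ℝ := (a ^ 4)⁻¹ * f (Hdil a⁻¹ x)

/-- D_a f(ω) = a⁻² f(a⁻¹ω). -/
def Dop (a : ℝ) (f : H3 → ℂ) (x : H3) : ℂ := ((a ^ 2 : ℝ) : ℂ)⁻¹ * f (Hdil a⁻¹ x)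

/-- The quasi-regular representation π(ω,a)f(υ) = a⁻² f(a⁻¹(ω⁻¹∗υ)). -/
def qrep (ω : H3) (a : ℝ) (f : H3 → ℂ) (υ : H3) : ℂ :=
  ((a ^ 2 : ℝ) : ℂ)⁻¹ * f (Hdil a⁻¹ (Hmul (Hinv ω) υ))

/-- Wavelet coefficient V_φ f(ω,a) = ⟨f, π(ω,a)φ⟩ (L²(ℍ) inner product). -/
def Vcoef (φ f : H3 → ℂ) (ω : H3) (a : ℝ) : ℂ :=
  ∫ x : H3, f x * starRingEnd ℂ (qrep ω a φ x)

/-- Schwartz functions on ℍ are the Schwartz functions on ℝ³. -/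
def IsSchwartz (f : H3 → ℂ) : Prop := ∃ Φ : SchwartzMap H3 ℂ, ⇑Φ = f

def IsSchwartzR (f : H3 → ℝ) : Prop := ∃ Φ : SchwartzMap H3 ℝ, ⇑Φ = f

/-- φ is admissible: ‖f‖₂² = c ∫_ℍ∫₀^∞ |V_φf(ω,a)|² a⁻⁵ da dω for some c > 0. -/
def Admissible (φ : H3 → ℂ) : Prop :=
  ∃ c : ℝ, 0 < c ∧ ∀ f : H3 → ℂ, MemLp f 2 volume →
    (∫ x : H3, ‖f x‖ ^ 2) =
      c * ∫ ω : H3, ∫ a in Set.Ioi (0 : ℝ), ‖Vcoef φ f ω a‖ ^ 2 * (a ^ 5)⁻¹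

/-- The Calderón kernel K_{ε,A} = ∫_ε^A φ̃_a ⋆ φ_a a⁻¹ da. -/
def Kker (φ : H3 → ℂ) (ε A : ℝ) (x : H3) : ℂ :=
  ∫ a in Set.Ioo ε A, Hconv (Hdilate (Htilde φ) a) (Hdilate φ a) x * ((a : ℝ) : ℂ)⁻¹

/-- Calderón admissibility: for some c ≠ 0 and every Schwartz g,
g ⋆ K_{ε,A} → c·g in the sense of tempered distributions as ε → 0, A → ∞. -/
def CalderonAdmissible (φ : H3 → ℂ) : Prop :=
  ∃ c : ℂ, c ≠ 0 ∧ ∀ g : H3 → ℂ, IsSchwartz g →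
    ∀ u : SchwartzMap H3 ℂ,
      Tendsto (fun p : ℝ × ℝ => ∫ x : H3, Hconv g (Kker φ p.1 p.2) x * u x)
        ((𝓝[>] (0 : ℝ)) ×ˢ atTop) (𝓝 (c * ∫ x : H3, g x * u x))

/-- Partial derivatives on ℝ³. -/
def pd1 (f : H3 → ℝ) (x : H3) : ℝ := fderiv ℝ f x (1, 0, 0)
def pd2 (f : H3 → ℝ) (x : H3) : ℝ := fderiv ℝ f x (0, 1, 0)
def pd3 (f : H3 → ℝ) (x : H3) : ℝ := fderiv ℝ f x (0, 0, 1)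

/-- Left-invariant vector field X = ∂_p − (q/2)∂_t. -/
def Xop (f : H3 → ℝ) (x : H3) : ℝ := pd1 f x - x.2.1 / 2 * pd3 f x

/-- Left-invariant vector field Y = ∂_q + (p/2)∂_t. -/
def Yop (f : H3 → ℝ) (x : H3) : ℝ := pd2 f x + x.1 / 2 * pd3 f x

/-- Sub-Laplacian L = −(X² + Y²). -/
def subL (f : H3 → ℝ) (x : H3) : ℝ := -(Xop (Xop f) x + Yop (Yop f) x)

/-- Left Haar measure a⁻⁵ dω da on G = ℍ⋊(0,∞). -/
def muG : Measure (H3 × ℝ) :=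
  (((volume : Measure H3).prod ((volume : Measure ℝ).restrict (Set.Ioi 0))).withDensity
    fun p => ENNReal.ofReal ((p.2 ^ 5)⁻¹))

section Infra

open Set

/-- The open set where everything is smooth. -/
def UU : Set (H3 × ℝ) := Set.univ ×ˢ Set.Ioi (0 : ℝ)

lemma UU_open : IsOpen UU := isOpen_univ.prod isOpen_Ioi

lemma mem_UU {x : H3} {t : ℝ} (ht : 0 < t) : ((x, t) : H3 × ℝ) ∈ UU := ⟨trivial, ht⟩

/-- Vector field direction for X. -/
def LXv (x : H3) : H3 := (1, 0, -(x.2.1 / 2))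

/-- Vector field direction for Y. -/
def LYv (x : H3) : H3 := (0, 1, x.1 / 2)

lemma Xop_eq (f : H3 → ℝ) (x : H3) : Xop f x = fderiv ℝ f x (LXv x) := by
  have hv : LXv x = ((1, 0, 0) : H3) + (-(x.2.1 / 2)) • ((0, 0, 1) : H3) := by
    simp [LXv, Prod.ext_iff]
  rw [Xop, pd1, pd3, hv, (fderiv ℝ f x).map_add, (fderiv ℝ f x).map_smul]
  simp [smul_eq_mul]; ring

lemma Yop_eq (f : H3 → ℝ) (x : H3) : Yop f x = fderiv ℝ f x (LYv x) := by
  have hv : LYv x = ((0, 1, 0) : H3) + (x.1 / 2) • ((0, 0, 1) : H3) := by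
    simp [LYv, Prod.ext_iff]
  rw [Yop, pd2, pd3, hv, (fderiv ℝ f x).map_add, (fderiv ℝ f x).map_smul]
  simp [smul_eq_mul]

lemma subL_eq (f : H3 → ℝ) (x : H3) :
    subL f x = -((fderiv ℝ (fun υ => fderiv ℝ f υ (LXv υ)) x (LXv x)) +
      (fderiv ℝ (fun υ => fderiv ℝ f υ (LYv υ)) x (LYv x))) := by
  have hx : Xop f = fun υ => fderiv ℝ f υ (LXv υ) := funext fun υ => Xop_eq f υ
  have hy : Yop f = fun υ => fderiv ℝ f υ (LYv υ) := funext fun υ => Yop_eq f υ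
  rw [subL, Xop_eq, Yop_eq, hx, hy]

lemma subL_neg (g : H3 → ℝ) (x : H3) : subL (fun υ => -(g υ)) x = -(subL g x) := by
  have e : ∀ v : H3 → H3, (fun υ : H3 => fderiv ℝ (fun w : H3 => -(g w)) υ (v υ)) =
      fun υ : H3 => -(fderiv ℝ g υ (v υ)) := by
    intro v; funext υ; rw [fderiv_fun_neg]; simp
  rw [subL_eq, subL_eq, e, e]
  have e2 : ∀ (G : H3 → ℝ) (w : H3), fderiv ℝ (fun υ : H3 => -(G υ)) x w = -(fderiv ℝ G x w) := by
    intro G w; rw [fderiv_fun_neg]; simp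
  rw [e2, e2]
  ring

lemma fderiv_slice {F : H3 × ℝ → ℝ} {x : H3} {t : ℝ} (hF : DifferentiableAt ℝ F (x, t)) (w : H3) :
    fderiv ℝ (fun υ : H3 => F (υ, t)) x w = fderiv ℝ F (x, t) ((w, 0) : H3 × ℝ) := by
  have hcurve : HasFDerivAt (fun υ : H3 => ((υ, t) : H3 × ℝ))
      ((ContinuousLinearMap.id ℝ H3).prod 0) x :=
    (hasFDerivAt_id x).prodMk (hasFDerivAt_const t x)
  have hcomp := (hF.hasFDerivAt.comp x hcurve).fderiv
  rw [show (fun υ : H3 => F (υ, t)) = F ∘ (fun υ : H3 => (υ, t)) from rfl, hcomp]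
  rfl

lemma hasDerivAt_slice {F : H3 × ℝ → ℝ} {x : H3} {t : ℝ} (hF : DifferentiableAt ℝ F (x, t)) :
    HasDerivAt (fun s => F (x, s)) (fderiv ℝ F (x, t) (((0 : H3), (1 : ℝ)) : H3 × ℝ)) t := by
  have hcurve : HasDerivAt (fun s : ℝ => ((x, s) : H3 × ℝ)) (((0 : H3), (1 : ℝ)) : H3 × ℝ) t :=
    (hasDerivAt_const t x).prodMk (hasDerivAt_id t)
  exact hF.hasFDerivAt.comp_hasDerivAt t hcurve

lemma swap_core {F : H3 × ℝ → ℝ} (hF : ContDiffOn ℝ 2 F UU) {x : H3} {t : ℝ} (ht : 0 < t)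
    (v : H3) :
    HasDerivAt (fun s => fderiv ℝ (fun υ : H3 => F (υ, s)) x v)
      (fderiv ℝ (fun υ : H3 => deriv (fun s => F (υ, s)) t) x v) t := by
  have hdiff : ∀ (y : H3) (s : ℝ), 0 < s → DifferentiableAt ℝ F (y, s) := fun y s hs =>
    (hF.contDiffAt (UU_open.mem_nhds (mem_UU hs))).differentiableAt two_ne_zero
  have hFat : ContDiffAt ℝ 2 F (x, t) := hF.contDiffAt (UU_open.mem_nhds (mem_UU ht))
  have hd2 : DifferentiableAt ℝ (fderiv ℝ F) (x, t) :=
    (hFat.fderiv_right (m := 1) (by norm_num)).differentiableAt one_ne_zero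
  have hcurve : HasDerivAt (fun s : ℝ => ((x, s) : H3 × ℝ)) (((0 : H3), (1 : ℝ)) : H3 × ℝ) t :=
    (hasDerivAt_const t x).prodMk (hasDerivAt_id t)
  have A : HasDerivAt (fun s => fderiv ℝ F (x, s))
      (fderiv ℝ (fderiv ℝ F) (x, t) (((0 : H3), (1 : ℝ)) : H3 × ℝ)) t :=
    hd2.hasFDerivAt.comp_hasDerivAt t hcurve
  have A' : HasDerivAt (fun s => fderiv ℝ F (x, s) ((v, 0) : H3 × ℝ))
      (fderiv ℝ (fderiv ℝ F) (x, t) (((0 : H3), (1 : ℝ)) : H3 × ℝ) ((v, 0) : H3 × ℝ)) t := by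
    simpa using A.clm_apply (hasDerivAt_const t ((v, 0) : H3 × ℝ))
  have hev : (fun s => fderiv ℝ (fun υ : H3 => F (υ, s)) x v) =ᶠ[nhds t]
      (fun s => fderiv ℝ F (x, s) ((v, 0) : H3 × ℝ)) := by
    filter_upwards [Ioi_mem_nhds ht] with s hs
    exact fderiv_slice (hdiff x s hs) v
  have B : HasDerivAt (fun s => fderiv ℝ (fun υ : H3 => F (υ, s)) x v)
      (fderiv ℝ (fderiv ℝ F) (x, t) (((0 : H3), (1 : ℝ)) : H3 × ℝ) ((v, 0) : H3 × ℝ)) t :=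
    A'.congr_of_eventuallyEq hev
  have hinner : (fun υ : H3 => deriv (fun s => F (υ, s)) t) =
      fun υ : H3 => fderiv ℝ F (υ, t) (((0 : H3), (1 : ℝ)) : H3 × ℝ) :=
    funext fun υ => (hasDerivAt_slice (hdiff υ t ht)).deriv
  have hcurve2 : HasFDerivAt (fun υ : H3 => ((υ, t) : H3 × ℝ))
      ((ContinuousLinearMap.id ℝ H3).prod 0) x :=
    (hasFDerivAt_id x).prodMk (hasFDerivAt_const t x)
  have C : HasFDerivAt (fun υ : H3 => fderiv ℝ F (υ, t))
      ((fderiv ℝ (fderiv ℝ F) (x, t)).comp ((ContinuousLinearMap.id ℝ H3).prod 0)) x :=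
    hd2.hasFDerivAt.comp x hcurve2
  have C' := (C.clm_apply (hasFDerivAt_const (((0 : H3), (1 : ℝ)) : H3 × ℝ) x)).fderiv
  have hsym := hFat.isSymmSndFDerivAt (by simp) ((v, 0) : H3 × ℝ) (((0 : H3), (1 : ℝ)) : H3 × ℝ)
  rw [hinner, C']
  simpa using hsym ▸ B

lemma slice_smooth {F : H3 × ℝ → ℝ} (hF : ContDiffOn ℝ 3 F UU) {M : H3 → H3}
    (hM : ContDiff ℝ 3 (fun y : H3 => ((M y, 0) : H3 × ℝ))) :
    ContDiffOn ℝ 2 (fun p : H3 × ℝ => fderiv ℝ (fun υ : H3 => F (υ, p.2)) p.1 (M p.1)) UU := by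
  have h1 : ContDiffOn ℝ 2 (fderiv ℝ F) UU := hF.fderiv_of_isOpen UU_open (by norm_num)
  have hg : ContDiffOn ℝ 2 (fun p : H3 × ℝ => ((M p.1, 0) : H3 × ℝ)) UU :=
    (((hM.of_le (by norm_num)).comp contDiff_fst)).contDiffOn
  have h2 : ContDiffOn ℝ 2 (fun p : H3 × ℝ => fderiv ℝ F p ((M p.1, 0) : H3 × ℝ)) UU :=
    h1.clm_apply hg
  refine h2.congr fun p hp => ?_
  have hp2 : (0 : ℝ) < p.2 := hp.2
  have hdF : DifferentiableAt ℝ F (p.1, p.2) :=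
    (hF.contDiffAt (UU_open.mem_nhds (mem_UU hp2))).differentiableAt (by norm_num)
  have := fderiv_slice hdF (M p.1)
  simpa using this

lemma hLXv : ContDiff ℝ 3 (fun y : H3 => ((LXv y, 0) : H3 × ℝ)) := by
  apply ContDiff.prodMk _ contDiff_const
  unfold LXv
  exact contDiff_const.prodMk (contDiff_const.prodMk ((contDiff_fst.comp contDiff_snd).div_const 2).neg)

lemma hLYv : ContDiff ℝ 3 (fun y : H3 => ((LYv y, 0) : H3 × ℝ)) := by
  apply ContDiff.prodMk _ contDiff_const
  unfold LYv
  exact contDiff_const.prodMk (contDiff_const.prodMk (contDiff_fst.div_const 2))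

lemma swap2 {F : H3 × ℝ → ℝ} (hF : ContDiffOn ℝ 3 F UU) {M : H3 → H3}
    (hM : ContDiff ℝ 3 (fun y : H3 => ((M y, 0) : H3 × ℝ)))
    {x : H3} {T : ℝ} (hT : 0 < T) (L : H3 → H3) :
    HasDerivAt
      (fun t => fderiv ℝ (fun υ : H3 => fderiv ℝ (fun w : H3 => F (w, t)) υ (M υ)) x (L x))
      (fderiv ℝ (fun υ : H3 => fderiv ℝ (fun w : H3 => deriv (fun s => F (w, s)) T) υ (M υ))
        x (L x)) T := by
  have hF1 : ContDiffOn ℝ 2 (fun p : H3 × ℝ => fderiv ℝ (fun υ : H3 => F (υ, p.2)) p.1 (M p.1))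
      UU := slice_smooth hF hM
  have main := swap_core hF1 (x := x) hT (L x)
  have hrw : (fun υ : H3 =>
      deriv (fun s => fderiv ℝ (fun w : H3 => F (w, s)) υ (M υ)) T) =
      fun υ : H3 => fderiv ℝ (fun w : H3 => deriv (fun s => F (w, s)) T) υ (M υ) := by
    funext υ
    exact (swap_core (hF.of_le (by norm_num)) (x := υ) hT (M υ)).deriv
  rw [← hrw]
  exact main

section WithH

variable {h : H3 → ℝ → ℝ}

lemma subL_hasDerivAt (hC : ContDiffOn ℝ (⊤ : ℕ∞) (fun p : H3 × ℝ => h p.1 p.2) (Set.univ ×ˢ Set.Ioi 0))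
    {x : H3} {T : ℝ} (hT : 0 < T) :
    HasDerivAt (fun t => subL (fun w => h w t) x) (subL (fun w => deriv (h w) T) x) T := by
  have hF3 : ContDiffOn ℝ 3 (fun p : H3 × ℝ => h p.1 p.2) UU := hC.of_le (WithTop.coe_le_coe.mpr le_top)
  have hX := swap2 hF3 hLXv (x := x) hT LXv
  have hY := swap2 hF3 hLYv (x := x) hT LYv
  have hsum := (hX.add hY).neg
  have e1 : (fun t => subL (fun w => h w t) x) = fun t =>
      -(fderiv ℝ (fun υ : H3 => fderiv ℝ (fun w : H3 => h w t) υ (LXv υ)) x (LXv x) +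
        fderiv ℝ (fun υ : H3 => fderiv ℝ (fun w : H3 => h w t) υ (LYv υ)) x (LYv x)) :=
    funext fun t => subL_eq _ x
  rw [e1, subL_eq]
  exact hsum

lemma heat_identity (hC : ContDiffOn ℝ (⊤ : ℕ∞) (fun p : H3 × ℝ => h p.1 p.2) (Set.univ ×ˢ Set.Ioi 0))
    (HE : ∀ (ω : H3) (t : ℝ), 0 < t → deriv (h ω) t + subL (fun υ => h υ t) ω = 0)
    {x : H3} {T : ℝ} (hT : 0 < T) :
    iteratedDeriv 2 (h x) T = subL (fun υ => subL (fun w => h w T) υ) x := by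
  have hs := (subL_hasDerivAt hC (x := x) hT).neg
  have hev : deriv (h x) =ᶠ[nhds T] (fun t => -(subL (fun w => h w t) x)) := by
    filter_upwards [Ioi_mem_nhds hT] with t htpos
    have := HE x t htpos
    linarith
  have hs2 : HasDerivAt (deriv (h x)) (-(subL (fun w => deriv (h w) T) x)) T :=
    hs.congr_of_eventuallyEq hev
  have hd2 : deriv (deriv (h x)) T = -(subL (fun w => deriv (h w) T) x) := hs2.deriv
  have hin : (fun υ : H3 => subL (fun w => h w T) υ) = fun υ : H3 => -(deriv (h υ) T) := by
    funext υ
    have := HE υ T hT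
    linarith
  have h2 : iteratedDeriv 2 (h x) T = deriv (deriv (h x)) T := by
    rw [show (2 : ℕ) = 1 + 1 from rfl, iteratedDeriv_succ, iteratedDeriv_one]
  rw [h2, hd2, hin, subL_neg]

lemma hderivAt (hC : ContDiffOn ℝ (⊤ : ℕ∞) (fun p : H3 × ℝ => h p.1 p.2) (Set.univ ×ˢ Set.Ioi 0))
    {x : H3} {s : ℝ} (hs : 0 < s) : HasDerivAt (h x) (deriv (h x) s) s := by
  have hF2 : ContDiffOn ℝ 2 (fun p : H3 × ℝ => h p.1 p.2) UU := hC.of_le (WithTop.coe_le_coe.mpr le_top)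
  have hdF : DifferentiableAt ℝ (fun p : H3 × ℝ => h p.1 p.2) (x, s) :=
    (hF2.contDiffAt (UU_open.mem_nhds (mem_UU hs))).differentiableAt two_ne_zero
  have h2 : HasDerivAt (h x)
      (fderiv ℝ (fun p : H3 × ℝ => h p.1 p.2) (x, s) (((0 : H3), (1 : ℝ)) : H3 × ℝ)) s :=
    hasDerivAt_slice hdF
  rw [h2.deriv]
  exact h2

lemma hxContDiffAt (hC : ContDiffOn ℝ (⊤ : ℕ∞) (fun p : H3 × ℝ => h p.1 p.2) (Set.univ ×ˢ Set.Ioi 0))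
    {x : H3} {r : ℝ} (hr : 0 < r) : ContDiffAt ℝ 2 (h x) r := by
  have hF2 : ContDiffOn ℝ 2 (fun p : H3 × ℝ => h p.1 p.2) UU := hC.of_le (WithTop.coe_le_coe.mpr le_top)
  have h1 : ContDiffAt ℝ 2 (fun p : H3 × ℝ => h p.1 p.2) (x, r) :=
    hF2.contDiffAt (UU_open.mem_nhds (mem_UU hr))
  have h2 : ContDiffAt ℝ 2 (fun s : ℝ => ((x, s) : H3 × ℝ)) r :=
    (contDiff_const.prodMk contDiff_id).contDiffAt
  exact h1.comp r h2

lemma hderiv2At (hC : ContDiffOn ℝ (⊤ : ℕ∞) (fun p : H3 × ℝ => h p.1 p.2) (Set.univ ×ˢ Set.Ioi 0))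
    {x : H3} {r : ℝ} (hr : 0 < r) : HasDerivAt (deriv (h x)) (deriv (deriv (h x)) r) r := by
  have hxc : ContDiffAt ℝ 2 (h x) r := hxContDiffAt hC hr
  have hf : ContDiffAt ℝ 1 (fderiv ℝ (h x)) r := hxc.fderiv_right (m := 1) (by norm_num)
  have hdd : DifferentiableAt ℝ (deriv (h x)) r := by
    have heq : deriv (h x) = fun s => fderiv ℝ (h x) s 1 := by
      funext s
      exact (fderiv_apply_one_eq_deriv).symm
    rw [heq]
    exact ((hf.clm_apply contDiffAt_const).differentiableAt one_ne_zero)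
  exact hdd.hasDerivAt

lemma Hdil_cancel {r : ℝ} (hr : r ≠ 0) (x : H3) : Hdil r (Hdil r⁻¹ x) = x := by
  unfold Hdil
  have h1 : r * (r⁻¹ * x.1) = x.1 := by field_simp
  have h2 : r * (r⁻¹ * x.2.1) = x.2.1 := by field_simp
  have h3 : r ^ 2 * (r⁻¹ ^ 2 * x.2.2) = x.2.2 := by field_simp
  rw [h1, h2, h3]

lemma dilate_eq (hC : ContDiffOn ℝ (⊤ : ℕ∞) (fun p : H3 × ℝ => h p.1 p.2) (Set.univ ×ˢ Set.Ioi 0))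
    (hhom : ∀ r : ℝ, 0 < r → ∀ (ω : H3) (t : ℝ), 0 < t →
      r ^ 4 * h (Hdil r ω) (r ^ 2 * t) = h ω t)
    {a : ℝ} (ha : 0 < a) (x : H3) :
    HdilateR (fun ω => -(deriv (h ω) 1)) (Real.sqrt a) x = -(a * deriv (h x) a) := by
  set r := Real.sqrt a with hrdef
  have hr : 0 < r := Real.sqrt_pos.mpr ha
  have hr2 : r ^ 2 = a := Real.sq_sqrt ha.le
  have hr4 : r ^ 4 = a ^ 2 := by rw [show r ^ 4 = (r ^ 2) ^ 2 by ring, hr2]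
  have key : ∀ t : ℝ, 0 < t → h (Hdil r⁻¹ x) t = a ^ 2 * h x (a * t) := by
    intro t ht
    have hh := hhom r hr (Hdil r⁻¹ x) t ht
    rw [Hdil_cancel hr.ne' x, hr2, hr4] at hh
    exact hh.symm
  have hinner : HasDerivAt (fun t : ℝ => a * t) a 1 := by
    simpa using (hasDerivAt_id (1 : ℝ)).const_mul a
  have hg : HasDerivAt (h x) (deriv (h x) a) ((fun t : ℝ => a * t) 1) := by
    simpa using hderivAt hC ha
  have hcomp : HasDerivAt (fun t : ℝ => h x (a * t)) (deriv (h x) a * a) 1 :=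
    hg.comp 1 hinner
  have hbig : HasDerivAt (fun t : ℝ => a ^ 2 * h x (a * t)) (a ^ 2 * (deriv (h x) a * a)) 1 :=
    hcomp.const_mul (a ^ 2)
  have hev : (h (Hdil r⁻¹ x)) =ᶠ[nhds 1] (fun t : ℝ => a ^ 2 * h x (a * t)) := by
    filter_upwards [Ioi_mem_nhds one_pos] with t ht
    exact key t ht
  have hD : HasDerivAt (h (Hdil r⁻¹ x)) (a ^ 2 * (deriv (h x) a * a)) 1 :=
    hbig.congr_of_eventuallyEq hev
  have hDval : deriv (h (Hdil r⁻¹ x)) 1 = a ^ 2 * (deriv (h x) a * a) := hD.deriv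
  show (r ^ 4)⁻¹ * -(deriv (h (Hdil r⁻¹ x)) 1) = -(a * deriv (h x) a)
  rw [hDval, hr4]
  field_simp

lemma convDeriv1 (hC : ContDiffOn ℝ (⊤ : ℕ∞) (fun p : H3 × ℝ => h p.1 p.2) (Set.univ ×ˢ Set.Ioi 0))
    (hsemi : ∀ s t : ℝ, 0 < s → 0 < t → ∀ x : H3,
      HconvR (fun ω => h ω s) (fun ω => h ω t) x = h x (s + t))
    (hint1 : ∀ t : ℝ, 0 < t → ∀ (x : H3) (s : ℝ), 0 < s →
      HasDerivAt (fun u => HconvR (fun ω => h ω u) (fun ω => h ω t) x)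
        (HconvR (fun ω => deriv (h ω) s) (fun ω => h ω t) x) s) :
    ∀ s t : ℝ, 0 < s → 0 < t → ∀ x : H3,
      HconvR (fun ω => deriv (h ω) s) (fun ω => h ω t) x = deriv (h x) (s + t) := by
  intro s t hs ht x
  have A := hint1 t ht x s hs
  have hg : HasDerivAt (h x) (deriv (h x) (s + t)) ((fun u : ℝ => u + t) s) := by
    simpa using hderivAt hC (show (0:ℝ) < s + t by positivity)
  have hinner : HasDerivAt (fun u : ℝ => u + t) 1 s := (hasDerivAt_id s).add_const t
  have B : HasDerivAt (fun u : ℝ => h x (u + t)) (deriv (h x) (s + t)) s := by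
    simpa [Function.comp_def] using hg.comp s hinner
  have hev : (fun u : ℝ => h x (u + t)) =ᶠ[nhds s]
      (fun u => HconvR (fun ω => h ω u) (fun ω => h ω t) x) := by
    filter_upwards [Ioi_mem_nhds hs] with u hu
    exact (hsemi u t hu ht x).symm
  exact (A.congr_of_eventuallyEq hev).unique B

lemma convDeriv2 (hC : ContDiffOn ℝ (⊤ : ℕ∞) (fun p : H3 × ℝ => h p.1 p.2) (Set.univ ×ˢ Set.Ioi 0))
    (hsemi : ∀ s t : ℝ, 0 < s → 0 < t → ∀ x : H3,
      HconvR (fun ω => h ω s) (fun ω => h ω t) x = h x (s + t))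
    (hint1 : ∀ t : ℝ, 0 < t → ∀ (x : H3) (s : ℝ), 0 < s →
      HasDerivAt (fun u => HconvR (fun ω => h ω u) (fun ω => h ω t) x)
        (HconvR (fun ω => deriv (h ω) s) (fun ω => h ω t) x) s)
    (hint2 : ∀ s : ℝ, 0 < s → ∀ (x : H3) (t : ℝ), 0 < t →
      HasDerivAt (fun u => HconvR (fun ω => deriv (h ω) s) (fun ω => h ω u) x)
        (HconvR (fun ω => deriv (h ω) s) (fun ω => deriv (h ω) t) x) t) :
    ∀ s t : ℝ, 0 < s → 0 < t → ∀ x : H3,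
      HconvR (fun ω => deriv (h ω) s) (fun ω => deriv (h ω) t) x
        = deriv (deriv (h x)) (s + t) := by
  intro s t hs ht x
  have A := hint2 s hs x t ht
  have hg : HasDerivAt (deriv (h x)) (deriv (deriv (h x)) (s + t)) ((fun u : ℝ => s + u) t) := by
    simpa using hderiv2At hC (show (0:ℝ) < s + t by positivity)
  have hinner : HasDerivAt (fun u : ℝ => s + u) 1 t := (hasDerivAt_id t).const_add s
  have B : HasDerivAt (fun u : ℝ => deriv (h x) (s + u)) (deriv (deriv (h x)) (s + t)) t := by
    simpa [Function.comp_def] using hg.comp t hinner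
  have hev : (fun u : ℝ => deriv (h x) (s + u)) =ᶠ[nhds t]
      (fun u => HconvR (fun ω => deriv (h ω) s) (fun ω => h ω u) x) := by
    filter_upwards [Ioi_mem_nhds ht] with u hu
    exact (convDeriv1 hC hsemi hint1 s u hs hu x).symm
  exact (A.congr_of_eventuallyEq hev).unique B

end WithH

end Infra

/-- φ_{√a} ⋆ φ_{√a} = a² (∂ₜ²h)(·,2a) for φ = −∂ₜh(·,1); in particular
with the heat equation this reads φ_{√a} ⋆ φ_{√a} = a² L²h(·,2a). -/
theorem mexicanHat_autocorrelation (h : H3 → ℝ → ℝ)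
    (hC : ContDiffOn ℝ (⊤ : ℕ∞) (fun p : H3 × ℝ => h p.1 p.2) (Set.univ ×ˢ Set.Ioi 0))
    (hhom : ∀ r : ℝ, 0 < r → ∀ (ω : H3) (t : ℝ), 0 < t →
      r ^ 4 * h (Hdil r ω) (r ^ 2 * t) = h ω t)
    (hsemi : ∀ s t : ℝ, 0 < s → 0 < t → ∀ x : H3,
      HconvR (fun ω => h ω s) (fun ω => h ω t) x = h x (s + t))
    (hSch : ∀ t : ℝ, 0 < t → IsSchwartzR (fun ω => h ω t))
    (htSch : ∀ (n : ℕ) (t : ℝ), 0 < t → IsSchwartzR (fun ω => iteratedDeriv n (h ω) t))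
    (hint1 : ∀ t : ℝ, 0 < t → ∀ (x : H3) (s : ℝ), 0 < s →
      HasDerivAt (fun u => HconvR (fun ω => h ω u) (fun ω => h ω t) x)
        (HconvR (fun ω => deriv (h ω) s) (fun ω => h ω t) x) s)
    (hint2 : ∀ s : ℝ, 0 < s → ∀ (x : H3) (t : ℝ), 0 < t →
      HasDerivAt (fun u => HconvR (fun ω => deriv (h ω) s) (fun ω => h ω u) x)
        (HconvR (fun ω => deriv (h ω) s) (fun ω => deriv (h ω) t) x) t) :
    (∀ a : ℝ, 0 < a → ∀ x : H3,
      HconvR (HdilateR (fun ω => -(deriv (h ω) 1)) (Real.sqrt a))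
             (HdilateR (fun ω => -(deriv (h ω) 1)) (Real.sqrt a)) x
        = a ^ 2 * iteratedDeriv 2 (h x) (2 * a)) ∧
    ((∀ (ω : H3) (t : ℝ), 0 < t → deriv (h ω) t + subL (fun υ => h υ t) ω = 0) →
      (∀ ω : H3, -(deriv (h ω) 1) = subL (fun υ => h υ 1) ω) ∧
      ∀ a : ℝ, 0 < a → ∀ x : H3,
        HconvR (HdilateR (fun ω => -(deriv (h ω) 1)) (Real.sqrt a))
               (HdilateR (fun ω => -(deriv (h ω) 1)) (Real.sqrt a)) x
          = a ^ 2 * subL (fun υ => subL (fun w => h w (2 * a)) υ) x) := by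
  have part1 : ∀ a : ℝ, 0 < a → ∀ x : H3,
      HconvR (HdilateR (fun ω => -(deriv (h ω) 1)) (Real.sqrt a))
             (HdilateR (fun ω => -(deriv (h ω) 1)) (Real.sqrt a)) x
        = a ^ 2 * iteratedDeriv 2 (h x) (2 * a) := by
    intro a ha x
    have hdil : HdilateR (fun ω => -(deriv (h ω) 1)) (Real.sqrt a) =
        fun y => -(a * deriv (h y) a) := funext fun y => dilate_eq hC hhom ha y
    rw [hdil]
    have e : (fun y : H3 => (-(a * deriv (h y) a)) * (-(a * deriv (h (Hmul (Hinv y) x)) a))) =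
        fun y : H3 => (a * a) * ((deriv (h y) a) * (deriv (h (Hmul (Hinv y) x)) a)) := by
      funext y; ring
    have hconv2 := convDeriv2 hC hsemi hint1 hint2 a a ha ha x
    have h2 : iteratedDeriv 2 (h x) (2 * a) = deriv (deriv (h x)) (a + a) := by
      rw [show (2 : ℕ) = 1 + 1 from rfl, iteratedDeriv_succ, iteratedDeriv_one,
        show 2 * a = a + a by ring]
    calc HconvR (fun y => -(a * deriv (h y) a)) (fun y => -(a * deriv (h y) a)) x
        = ∫ y : H3, (-(a * deriv (h y) a)) * (-(a * deriv (h (Hmul (Hinv y) x)) a)) := rfl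
      _ = ∫ y : H3, (a * a) * ((deriv (h y) a) * (deriv (h (Hmul (Hinv y) x)) a)) := by rw [e]
      _ = (a * a) * ∫ y : H3, (deriv (h y) a) * (deriv (h (Hmul (Hinv y) x)) a) :=
          integral_const_mul (a * a) _
      _ = (a * a) * HconvR (fun ω => deriv (h ω) a) (fun ω => deriv (h ω) a) x := rfl
      _ = (a * a) * deriv (deriv (h x)) (a + a) := by rw [hconv2]
      _ = a ^ 2 * iteratedDeriv 2 (h x) (2 * a) := by rw [h2]; ring
  refine ⟨part1, fun HE => ⟨fun ω => ?_, fun a ha x => ?_⟩⟩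
  · have := HE ω 1 one_pos
    linarith
  · rw [part1 a ha x, heat_identity hC HE (show (0:ℝ) < 2 * a by positivity)]
end
end

section
/- Suppose φ, ψ are Schwartz functions on ℍ and there exist constants k, c > 0 and a nonzero real number q such that for all a>0, φ̃_{a^q} ⋆ φ_{a^q} = −a·c·(d/da)ψ_{k a^q}. Then for every Schwartz function g on ℍ and all 0 < ε < A < ∞, g ⋆ (∫_ε^A φ̃_a ⋆ φ_a a⁻¹ da) = q·c·( g⋆ψ_{εk} − g⋆ψ_{Ak} ). -/
/-! Substituting `a = b ^ q` in the hypothesis and using the chain rule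
`b • (d/db) ψ_{k b^q} = (q k b^q) • ψ'_{k b^q}` turns the integrand `φ̃_a ⋆ φ_a a⁻¹` of the
Calderón kernel into `-q c (d/da) ψ_{k a}`, so the fundamental theorem of calculus evaluates
`K_{ε,A}` pointwise. Convolving with `g` is then linear, since `g` is integrable and the dilates
of `ψ` are bounded and continuous. -/

open MeasureTheory Filter Topology

noncomputable section

open Set

-- Instance search does not find this for the nested product `ℝ × ℝ × ℝ`.
instance : Measure.IsAddHaarMeasure (volume : Measure H3) :=
  Measure.prod.instIsAddHaarMeasure volume volume

lemma contDiffOn_Hdilate_apply {f : H3 → ℂ} {n : WithTop ℕ∞} (hf : ContDiff ℝ n f) (z : H3) :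
    ContDiffOn ℝ n (fun s : ℝ => Hdilate f s z) (Ioi 0) := by
  have hinv : ContDiffOn ℝ n (fun s : ℝ => s⁻¹) (Ioi 0) :=
    contDiffOn_id.inv fun s hs => hs.ne'
  have hdil : ContDiffOn ℝ n (fun s : ℝ => Hdil s⁻¹ z) (Ioi 0) :=
    (hinv.mul contDiffOn_const).prodMk
      ((hinv.mul contDiffOn_const).prodMk ((hinv.pow 2).mul contDiffOn_const))
  have hscale : ContDiffOn ℝ n (fun s : ℝ => ((s ^ 4 : ℝ) : ℂ)⁻¹) (Ioi 0) :=
    (Complex.ofRealCLM.contDiff.comp (contDiff_id.pow 4)).contDiffOn.inv fun s hs =>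
      Complex.ofReal_ne_zero.mpr (pow_pos hs 4).ne'
  exact hscale.mul (hf.comp_contDiffOn hdil)

lemma continuous_Hdilate {f : H3 → ℂ} (hf : Continuous f) (a : ℝ) :
    Continuous (Hdilate f a) :=
  continuous_const.mul (hf.comp (by unfold Hdil; fun_prop))

lemma norm_Hdilate_le {f : H3 → ℂ} {C : ℝ} (hC : ∀ z, ‖f z‖ ≤ C) (a : ℝ) (z : H3) :
    ‖Hdilate f a z‖ ≤ ‖a ^ 4‖⁻¹ * C := by
  rw [Hdilate, norm_mul, norm_inv, Complex.norm_real]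
  exact mul_le_mul_of_nonneg_left (hC _) (by positivity)

lemma integrable_mul_comp_Hmul_Hinv {g f : H3 → ℂ} (hg : Integrable g) (hf : Continuous f)
    {C : ℝ} (hC : ∀ z, ‖f z‖ ≤ C) (x : H3) :
    Integrable fun y => g y * f (Hmul (Hinv y) x) :=
  hg.mul_bdd (hf.comp (by unfold Hmul Hinv; fun_prop)).aestronglyMeasurable
    (Eventually.of_forall fun y => hC _)

lemma Hconv_const_mul_sub {g f₁ f₂ : H3 → ℂ} {x : H3} (r : ℂ)
    (h₁ : Integrable fun y => g y * f₁ (Hmul (Hinv y) x))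
    (h₂ : Integrable fun y => g y * f₂ (Hmul (Hinv y) x)) :
    Hconv g (fun z => r * (f₁ z - f₂ z)) x = r * (Hconv g f₁ x - Hconv g f₂ x) := by
  unfold Hconv
  rw [← integral_sub h₁ h₂, ← integral_const_mul]
  congr 1 with y
  ring

lemma smul_deriv_comp_const_mul_rpow {E : Type*} [NormedAddCommGroup E] [NormedSpace ℝ E]
    {h : ℝ → E} {k q b : ℝ} (hb : 0 < b) (hh : DifferentiableAt ℝ h (k * b ^ q)) :
    b • deriv (fun t => h (k * t ^ q)) b = (q * (k * b ^ q)) • deriv h (k * b ^ q) := by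
  have hchain : HasDerivAt (fun t => h (k * t ^ q))
      ((k * (q * b ^ (q - 1))) • deriv h (k * b ^ q)) b :=
    hh.hasDerivAt.scomp b ((Real.hasDerivAt_rpow_const (Or.inl hb.ne')).const_mul k)
  rw [hchain.deriv, smul_smul, Real.rpow_sub_one hb.ne']
  congr 1
  field_simp

lemma integral_Ioo_smul_deriv_comp_const_mul {E : Type*} [NormedAddCommGroup E]
    [NormedSpace ℝ E] [CompleteSpace E] {h : ℝ → E} (hh : ContDiffOn ℝ 1 h (Ioi 0))
    {k ε A : ℝ} (hk : 0 < k) (hε : 0 < ε) (hεA : ε ≤ A) :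
    ∫ a in Ioo ε A, k • deriv h (k * a) = h (k * A) - h (k * ε) := by
  rw [← integral_Ioc_eq_integral_Ioo, ← intervalIntegral.integral_of_le hεA,
    intervalIntegral.integral_smul, intervalIntegral.integral_comp_mul_left _ hk.ne', smul_smul,
    mul_inv_cancel₀ hk.ne', one_smul]
  have hsub : uIcc (k * ε) (k * A) ⊆ Ioi 0 := by
    rw [uIcc_of_le (by gcongr)]
    exact fun s hs => lt_of_lt_of_le (mul_pos hk hε) hs.1
  exact intervalIntegral.integral_deriv_eq_sub' h rfl
    (fun s hs => (hh.contDiffAt (isOpen_Ioi.mem_nhds (hsub hs))).differentiableAt one_ne_zero)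
    ((hh.continuousOn_deriv_of_isOpen isOpen_Ioi le_rfl).mono hsub)

lemma mul_inv_eq_neg_mul_smul_deriv_of_rpow {F h : ℝ → ℂ} {k c q : ℝ} (hk : 0 < k) (hq : q ≠ 0)
    (hh : ∀ s, 0 < s → DifferentiableAt ℝ h s)
    (hrel : ∀ b, 0 < b → F (b ^ q) = -((b * c : ℝ) : ℂ) * deriv (fun t => h (k * t ^ q)) b)
    {a : ℝ} (ha : 0 < a) :
    F a * (a : ℂ)⁻¹ = -((q * c : ℝ) : ℂ) * k • deriv h (k * a) := by
  obtain ⟨b, hb, rfl⟩ : ∃ b, 0 < b ∧ b ^ q = a :=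
    ⟨a ^ q⁻¹, Real.rpow_pos_of_pos ha _, Real.rpow_inv_rpow ha.le hq⟩
  have hchain := smul_deriv_comp_const_mul_rpow hb (hh _ (mul_pos hk ha))
  rw [Complex.real_smul, Complex.real_smul] at hchain
  have hbq : ((b ^ q : ℝ) : ℂ) ≠ 0 := Complex.ofReal_ne_zero.mpr ha.ne'
  rw [hrel b hb, Complex.real_smul]
  field_simp
  push_cast at hchain ⊢
  linear_combination (-c : ℂ) * hchain

lemma Kker_eq_of_rpow_relation {φ ψ : H3 → ℂ} (hψ : ContDiff ℝ 1 ψ) {k c q : ℝ} (hk : 0 < k)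
    (hq : q ≠ 0)
    (hrel : ∀ a : ℝ, 0 < a → ∀ x : H3,
      Hconv (Hdilate (Htilde φ) (a ^ q)) (Hdilate φ (a ^ q)) x
        = -(((a * c : ℝ) : ℂ)) * deriv (fun b : ℝ => Hdilate ψ (k * b ^ q) x) a)
    {ε A : ℝ} (hε : 0 < ε) (hεA : ε ≤ A) (z : H3) :
    Kker φ ε A z = ((q * c : ℝ) : ℂ) * (Hdilate ψ (ε * k) z - Hdilate ψ (A * k) z) := by
  have hsmooth := contDiffOn_Hdilate_apply hψ z
  have hintegrand : EqOn
      (fun a : ℝ => Hconv (Hdilate (Htilde φ) a) (Hdilate φ a) z * ((a : ℝ) : ℂ)⁻¹)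
      (fun a => -((q * c : ℝ) : ℂ) * k • deriv (fun s => Hdilate ψ s z) (k * a)) (Ioo ε A) :=
    fun a ha => mul_inv_eq_neg_mul_smul_deriv_of_rpow
      (F := fun a => Hconv (Hdilate (Htilde φ) a) (Hdilate φ a) z) hk hq
      (fun s hs => (hsmooth.contDiffAt (isOpen_Ioi.mem_nhds hs)).differentiableAt one_ne_zero)
      (fun b hb => hrel b hb z) (hε.trans ha.1)
  rw [Kker, setIntegral_congr_fun measurableSet_Ioo hintegrand, integral_const_mul,
    integral_Ioo_smul_deriv_comp_const_mul hsmooth hk hε hεA, mul_comm ε, mul_comm A]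
  ring

theorem conv_Kker_telescope_general (φ ψ : H3 → ℂ) (hψ : IsSchwartz ψ)
    (k c : ℝ) (hk : 0 < k) (q : ℝ) (hq : q ≠ 0)
    (hrel : ∀ a : ℝ, 0 < a → ∀ x : H3,
      Hconv (Hdilate (Htilde φ) (a ^ q)) (Hdilate φ (a ^ q)) x
        = -(((a * c : ℝ) : ℂ)) * deriv (fun b : ℝ => Hdilate ψ (k * b ^ q) x) a)
    (g : H3 → ℂ) (hg : IsSchwartz g) (ε A : ℝ) (hε : 0 < ε) (hεA : ε < A) :
    ∀ x : H3, Hconv g (Kker φ ε A) x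
      = ((q * c : ℝ) : ℂ) *
          (Hconv g (Hdilate ψ (ε * k)) x - Hconv g (Hdilate ψ (A * k)) x) := by
  obtain ⟨Ψ, rfl⟩ := hψ
  obtain ⟨G, rfl⟩ := hg
  intro x
  have hKker : Kker φ ε A =
      fun z => ((q * c : ℝ) : ℂ) * (Hdilate Ψ (ε * k) z - Hdilate Ψ (A * k) z) :=
    funext (Kker_eq_of_rpow_relation (Ψ.smooth 1) hk hq hrel hε hεA.le)
  have hintegrable (a : ℝ) : Integrable fun y => G y * Hdilate Ψ a (Hmul (Hinv y) x) :=
    integrable_mul_comp_Hmul_Hinv G.integrable (continuous_Hdilate Ψ.continuous a)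
      (norm_Hdilate_le (Ψ.norm_le_seminorm ℝ) a) x
  rw [hKker, Hconv_const_mul_sub _ (hintegrable _) (hintegrable _)]

/-- g ⋆ K_{ε,A} = qc (g⋆ψ_{εk} − g⋆ψ_{Ak}). -/
theorem conv_Kker_telescope (φ ψ : H3 → ℂ) (hφ : IsSchwartz φ) (hψ : IsSchwartz ψ)
    (k c : ℝ) (hk : 0 < k) (hc : 0 < c) (q : ℝ) (hq : q ≠ 0)
    (hdiff : ∀ a : ℝ, 0 < a → ∀ x : H3,
      DifferentiableAt ℝ (fun b : ℝ => Hdilate ψ (k * b ^ q) x) a)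
    (hrel : ∀ a : ℝ, 0 < a → ∀ x : H3,
      Hconv (Hdilate (Htilde φ) (a ^ q)) (Hdilate φ (a ^ q)) x
        = -(((a * c : ℝ) : ℂ)) * deriv (fun b : ℝ => Hdilate ψ (k * b ^ q) x) a)
    (g : H3 → ℂ) (hg : IsSchwartz g) (ε A : ℝ) (hε : 0 < ε) (hεA : ε < A) :
    ∀ x : H3, Hconv g (Kker φ ε A) x
      = ((q * c : ℝ) : ℂ) *
          (Hconv g (Hdilate ψ (ε * k)) x - Hconv g (Hdilate ψ (A * k)) x) :=
  conv_Kker_telescope_general φ ψ hψ k c hk q hq hrel g hg ε A hε hεA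
end
end
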